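/- arXiv:1705.03810 — 3 statements merged into one kernel-verified Lean document; each statement's English description precedes it below -/
import Mathlib

section
/- Let (H, A, ‖·‖♯) be a CS space with bound L > 0, let 1 ≤ p < ∞, let Φ : H → ℝ^m be a linear map, and let C₀, C₁ > 0. Suppose that for every x♮ ∈ H, every ε ≥ 0, and every e ∈ ℝ^m with ‖e‖_{ℓp} ≤ ε, setting y = Φx♮ + e, every x⋆ ∈ H that is a minimizer of ‖x‖♯ subject to ‖Φx − y‖_{ℓp} ≤ ε (i.e., ‖Φx⋆ − y‖_{ℓp} ≤ ε and ‖x⋆‖♯ ≤ ‖x‖♯ for every x with ‖Φx − y‖_{ℓp} ≤ ε) satisfies ‖x⋆ − x♮‖₂ ≤ C₀‖x♮ − a‖♯ + C₁ε for every a ∈ A. Then Φ satisfies the (p, 2C₀, 1/(2C₁))-robust width property over B♯. -/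
/-!
Feed the recovery guarantee the signal `x` together with the noise `e = -Φx` at noise level
`ε = ‖Φx‖_p`. The measurement is then `y = 0`, so `0` is feasible and, having the least `‖·‖♯`,
is a minimizer; with `a = 0` the guarantee reads `‖x‖₂ ≤ C₀‖x‖♯ + C₁‖Φx‖_p`. When
`‖Φx‖_p < ‖x‖₂ / (2C₁)` the last term is below `‖x‖₂ / 2`, whence `‖x‖₂ ≤ 2C₀‖x‖♯`.
-/

open Finset

/-- The ℓp norm of a vector in ℝ^m, for real `p`. -/
noncomputable def lpNorm {m : ℕ} (p : ℝ) (u : Fin m → ℝ) : ℝ :=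
  (∑ i, |u i| ^ p) ^ (1 / p)

section lpNorm

variable {m : ℕ}

theorem lpNorm_nonneg (p : ℝ) (u : Fin m → ℝ) : 0 ≤ lpNorm p u :=
  Real.rpow_nonneg (sum_nonneg fun i _ => Real.rpow_nonneg (abs_nonneg (u i)) p) _

theorem lpNorm_zero {p : ℝ} (hp : p ≠ 0) : lpNorm p (0 : Fin m → ℝ) = 0 := by
  simp [lpNorm, Real.zero_rpow hp, Real.zero_rpow (inv_ne_zero hp)]

theorem lpNorm_neg (p : ℝ) (u : Fin m → ℝ) : lpNorm p (-u) = lpNorm p u := by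
  simp [lpNorm]

end lpNorm

def StableRobustRecovery {H : Type*} [NormedAddCommGroup H] [Module ℝ H] {m : ℕ}
    (A : Set H) (sharp : H → ℝ) (p : ℝ) (Φ : H →ₗ[ℝ] (Fin m → ℝ)) (C₀ C₁ : ℝ) : Prop :=
  ∀ (xnat : H) (ε : ℝ), 0 ≤ ε → ∀ e : Fin m → ℝ, lpNorm p e ≤ ε →
    ∀ xstar : H,
      lpNorm p (Φ xstar - (Φ xnat + e)) ≤ ε →
      (∀ x : H, lpNorm p (Φ x - (Φ xnat + e)) ≤ ε → sharp xstar ≤ sharp x) →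
      ∀ a ∈ A, ‖xstar - xnat‖ ≤ C₀ * sharp (xnat - a) + C₁ * ε

theorem StableRobustRecovery.norm_le {H : Type*} [NormedAddCommGroup H] [Module ℝ H] {m : ℕ}
    {A : Set H} {sharp : H → ℝ} {p : ℝ} {Φ : H →ₗ[ℝ] (Fin m → ℝ)} {C₀ C₁ : ℝ}
    (hrec : StableRobustRecovery A sharp p Φ C₀ C₁) (hA0 : (0 : H) ∈ A)
    (hsharp_zero_le : ∀ x, sharp 0 ≤ sharp x) (hp : p ≠ 0) (x : H) :
    ‖x‖ ≤ C₀ * sharp x + C₁ * lpNorm p (Φ x) := by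
  have hzero_feasible : lpNorm p (Φ 0 - (Φ x + -Φ x)) ≤ lpNorm p (Φ x) := by
    simpa [lpNorm_zero hp] using lpNorm_nonneg p (Φ x)
  simpa using hrec x _ (lpNorm_nonneg p (Φ x)) (-Φ x) (lpNorm_neg p (Φ x)).le 0
    hzero_feasible (fun y _ => hsharp_zero_le y) 0 hA0

theorem stable_robust_recovery_implies_rwp_general
    {H : Type*} [NormedAddCommGroup H] [InnerProductSpace ℝ H]
    (A : Set H) (sharp : H → ℝ)
    -- sharp is a norm
    (sharp_nonneg : ∀ x, 0 ≤ sharp x)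
    (sharp_hom : ∀ (c : ℝ) (x : H), sharp (c • x) = |c| * sharp x)
    -- CS space axioms
    (hA0 : (0 : H) ∈ A)
    (p : ℝ) (hp : 1 ≤ p) {m : ℕ} (Φ : H →ₗ[ℝ] (Fin m → ℝ))
    (C₀ C₁ : ℝ) (hC₁ : 0 < C₁)
    -- stable and robust recovery guarantee
    (hrec : ∀ (xnat : H) (ε : ℝ), 0 ≤ ε → ∀ e : Fin m → ℝ, lpNorm p e ≤ ε →
      ∀ xstar : H,
        lpNorm p (Φ xstar - (Φ xnat + e)) ≤ ε →
        (∀ x : H, lpNorm p (Φ x - (Φ xnat + e)) ≤ ε → sharp xstar ≤ sharp x) →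
        ∀ a ∈ A, ‖xstar - xnat‖ ≤ C₀ * sharp (xnat - a) + C₁ * ε) :
    -- conclusion: (p, 2C₀, 1/(2C₁))-robust width property over B♯
    ∀ x : H, lpNorm p (Φ x) < (1 / (2 * C₁)) * ‖x‖ → ‖x‖ ≤ 2 * C₀ * sharp x := by
  intro x hx
  have hsharp0 : sharp 0 = 0 := by simpa using sharp_hom 0 0
  have hrecovery : ‖x‖ ≤ C₀ * sharp x + C₁ * lpNorm p (Φ x) :=
    StableRobustRecovery.norm_le hrec hA0 (fun y => hsharp0 ▸ sharp_nonneg y)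
      (by linarith) x
  have hnoise : C₁ * lpNorm p (Φ x) < ‖x‖ / 2 := by
    calc C₁ * lpNorm p (Φ x) < C₁ * ((1 / (2 * C₁)) * ‖x‖) := by gcongr
      _ = ‖x‖ / 2 := by field_simp
  linarith

/-- Theorem 1, (b) ⇒ (a): if the stable and robust recovery guarantee holds for
ℓp-constrained compressive sensing with constants C₀, C₁, then Φ satisfies the
(p, 2C₀, 1/(2C₁))-robust width property over the sharp unit ball. -/
theorem stable_robust_recovery_implies_rwp
    {H : Type*} [NormedAddCommGroup H] [InnerProductSpace ℝ H] [FiniteDimensional ℝ H]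
    (A : Set H) (sharp : H → ℝ) (L : ℝ) (hL : 0 < L)
    -- sharp is a norm
    (sharp_nonneg : ∀ x, 0 ≤ sharp x)
    (sharp_def : ∀ x, sharp x = 0 → x = 0)
    (sharp_hom : ∀ (c : ℝ) (x : H), sharp (c • x) = |c| * sharp x)
    (sharp_tri : ∀ x y, sharp (x + y) ≤ sharp x + sharp y)
    -- CS space axioms
    (hA0 : (0 : H) ∈ A)
    (hdecomp : ∀ a ∈ A, ∀ v : H, ∃ v₁ v₂ : H, v = v₁ + v₂ ∧
      sharp (a + v₁) = sharp a + sharp v₁ ∧ sharp v₂ ≤ L * ‖v‖)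
    (p : ℝ) (hp : 1 ≤ p) {m : ℕ} (Φ : H →ₗ[ℝ] (Fin m → ℝ))
    (C₀ C₁ : ℝ) (hC₀ : 0 < C₀) (hC₁ : 0 < C₁)
    -- stable and robust recovery guarantee
    (hrec : ∀ (xnat : H) (ε : ℝ), 0 ≤ ε → ∀ e : Fin m → ℝ, lpNorm p e ≤ ε →
      ∀ xstar : H,
        lpNorm p (Φ xstar - (Φ xnat + e)) ≤ ε →
        (∀ x : H, lpNorm p (Φ x - (Φ xnat + e)) ≤ ε → sharp xstar ≤ sharp x) →
        ∀ a ∈ A, ‖xstar - xnat‖ ≤ C₀ * sharp (xnat - a) + C₁ * ε) :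
    -- conclusion: (p, 2C₀, 1/(2C₁))-robust width property over B♯
    ∀ x : H, lpNorm p (Φ x) < (1 / (2 * C₁)) * ‖x‖ → ‖x‖ ≤ 2 * C₀ * sharp x :=
  stable_robust_recovery_implies_rwp_general A sharp sharp_nonneg sharp_hom hA0 p hp Φ C₀ C₁ hC₁
    hrec
end

section
/- Let Φ : ℂ^N → ℂ^m be a linear map, let w = (w₁,…,w_N) be weights with w_j ≥ 1 for all j, let s > 0, let 1 ≤ p < ∞, and let ψ, τ > 0 with ψ < 1. Suppose Φ satisfies the weighted robust null space property with respect to ℓp of order s: for every v ∈ ℂ^N and every set S ⊆ {1,…,N} with w(S) := ∑_{j∈S} w_j² ≤ s, one has ‖v_S‖_{ℓ2} ≤ (ψ/√s)‖v_{S^c}‖_{w,1} + τ‖Φv‖_{ℓp}. Then for every v ∈ ℂ^N and every a ∈ ℂ^N with ∑_{j : a_j ≠ 0} w_j² ≤ s, one has ‖v‖_{ℓ2} ≤ (ψ/√s + 1)‖v − a‖_{w,1} + τ‖Φv‖_{ℓp}. -/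
open Finset

/-- The ℓp norm of a vector in ℂ^m, for real `p`. -/
noncomputable def lpNormC {m : ℕ} (p : ℝ) (u : Fin m → ℂ) : ℝ :=
  (∑ i, ‖u i‖ ^ p) ^ (1 / p)

/-- The weighted ℓ1 norm of a vector in ℂ^N with weights w. -/
noncomputable def w1NormC {N : ℕ} (w : Fin N → ℝ) (v : Fin N → ℂ) : ℝ :=
  ∑ j, w j * ‖v j‖

/-- The ℓ2 norm of a vector in ℂ^N. -/
noncomputable def l2NormC {N : ℕ} (v : Fin N → ℂ) : ℝ :=
  Real.sqrt (∑ j, ‖v j‖ ^ 2)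

/-- The restriction of a vector to a set of coordinates (zero outside the set). -/
noncomputable def restrictC {N : ℕ} (S : Finset (Fin N)) (v : Fin N → ℂ) : Fin N → ℂ :=
  fun j => if j ∈ S then v j else 0

/-!
With `S` the support of `a`, split `v = v_S + v_{Sᶜ}`. The null space property bounds
`‖v_S‖₂`, while `‖v_{Sᶜ}‖₂ ≤ ‖v_{Sᶜ}‖_{w,1}` because the weights are at least `1`.
Since `a` vanishes off `S`, `v_{Sᶜ} = (v - a)_{Sᶜ}`, whose weighted ℓ1 norm is at most
`‖v - a‖_{w,1}`.
-/

section

variable {N : ℕ}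

theorem l2NormC_eq_norm_toLp (v : Fin N → ℂ) :
    l2NormC v = ‖(WithLp.toLp 2 v : EuclideanSpace ℂ (Fin N))‖ := by
  rw [EuclideanSpace.norm_eq]
  rfl

theorem l2NormC_add_le (u v : Fin N → ℂ) : l2NormC (u + v) ≤ l2NormC u + l2NormC v := by
  simpa only [l2NormC_eq_norm_toLp, WithLp.toLp_add] using norm_add_le _ _

theorem restrictC_add_restrictC_compl (S : Finset (Fin N)) (v : Fin N → ℂ) :
    restrictC S v + restrictC Sᶜ v = v := by
  funext j
  by_cases hj : j ∈ S <;> simp [restrictC, hj]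

theorem l2NormC_le_restrictC_add_restrictC_compl (S : Finset (Fin N)) (v : Fin N → ℂ) :
    l2NormC v ≤ l2NormC (restrictC S v) + l2NormC (restrictC Sᶜ v) := by
  conv_lhs => rw [← restrictC_add_restrictC_compl S v]
  exact l2NormC_add_le _ _

theorem l2NormC_le_sum_norm (v : Fin N → ℂ) : l2NormC v ≤ ∑ j, ‖v j‖ := by
  have hnonneg : ∀ j ∈ univ, 0 ≤ ‖v j‖ := fun j _ => norm_nonneg _
  calc l2NormC v ≤ Real.sqrt ((∑ j, ‖v j‖) ^ 2) :=
        Real.sqrt_le_sqrt (sum_sq_le_sq_sum_of_nonneg hnonneg)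
    _ = ∑ j, ‖v j‖ := Real.sqrt_sq (sum_nonneg hnonneg)

theorem sum_norm_le_w1NormC {w : Fin N → ℝ} (hw : ∀ j, 1 ≤ w j) (v : Fin N → ℂ) :
    ∑ j, ‖v j‖ ≤ w1NormC w v :=
  sum_le_sum fun j _ => le_mul_of_one_le_left (norm_nonneg _) (hw j)

theorem l2NormC_le_w1NormC {w : Fin N → ℝ} (hw : ∀ j, 1 ≤ w j) (v : Fin N → ℂ) :
    l2NormC v ≤ w1NormC w v :=
  (l2NormC_le_sum_norm v).trans (sum_norm_le_w1NormC hw v)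

theorem w1NormC_restrictC_le {w : Fin N → ℝ} (hw : ∀ j, 0 ≤ w j) (S : Finset (Fin N))
    (v : Fin N → ℂ) : w1NormC w (restrictC S v) ≤ w1NormC w v := by
  refine sum_le_sum fun j _ => ?_
  by_cases hj : j ∈ S
  · simp [restrictC, hj]
  · simpa [restrictC, hj] using mul_nonneg (hw j) (norm_nonneg (v j))

theorem restrictC_compl_sub_of_eq_zero {S : Finset (Fin N)} {a : Fin N → ℂ}
    (ha : ∀ j ∉ S, a j = 0) (v : Fin N → ℂ) :
    restrictC Sᶜ (v - a) = restrictC Sᶜ v := by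
  funext j
  by_cases hj : j ∈ S
  · simp [restrictC, hj]
  · simp [restrictC, hj, ha j hj]

end

theorem weighted_nsp_implies_general_nsp_general
    {N m : ℕ} (Φ : (Fin N → ℂ) →ₗ[ℂ] (Fin m → ℂ))
    (w : Fin N → ℝ) (hw : ∀ j, 1 ≤ w j)
    (s : ℝ)
    (p : ℝ)
    (ψ τ : ℝ) (hψ : 0 < ψ)
    (hNSP : ∀ (v : Fin N → ℂ) (S : Finset (Fin N)), (∑ j ∈ S, (w j) ^ 2) ≤ s →
      l2NormC (restrictC S v) ≤
        (ψ / Real.sqrt s) * w1NormC w (restrictC Sᶜ v) + τ * lpNormC p (Φ v)) :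
    ∀ (v a : Fin N → ℂ),
      (∑ j ∈ Finset.univ.filter (fun j => a j ≠ 0), (w j) ^ 2) ≤ s →
      l2NormC v ≤ (ψ / Real.sqrt s + 1) * w1NormC w (v - a) + τ * lpNormC p (Φ v) := by
  intro v a ha
  set S := univ.filter (fun j => a j ≠ 0)
  have hoff : restrictC Sᶜ (v - a) = restrictC Sᶜ v :=
    restrictC_compl_sub_of_eq_zero (fun j hj => by simpa [S] using hj) v
  have htail : w1NormC w (restrictC Sᶜ v) ≤ w1NormC w (v - a) :=
    hoff ▸ w1NormC_restrictC_le (fun j => zero_le_one.trans (hw j)) Sᶜ (v - a)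
  calc l2NormC v ≤ l2NormC (restrictC S v) + l2NormC (restrictC Sᶜ v) :=
        l2NormC_le_restrictC_add_restrictC_compl S v
    _ ≤ (ψ / Real.sqrt s * w1NormC w (restrictC Sᶜ v) + τ * lpNormC p (Φ v))
          + w1NormC w (restrictC Sᶜ v) :=
        add_le_add (hNSP v S ha) (l2NormC_le_w1NormC hw _)
    _ ≤ (ψ / Real.sqrt s * w1NormC w (v - a) + τ * lpNormC p (Φ v)) + w1NormC w (v - a) := by
        gcongr
    _ = (ψ / Real.sqrt s + 1) * w1NormC w (v - a) + τ * lpNormC p (Φ v) := by ring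

/-- Example 1 (weighted case): the weighted robust null space property with respect to ℓp
of order s implies the general robust null space property of Definition 3. -/
theorem weighted_nsp_implies_general_nsp
    {N m : ℕ} (Φ : (Fin N → ℂ) →ₗ[ℂ] (Fin m → ℂ))
    (w : Fin N → ℝ) (hw : ∀ j, 1 ≤ w j)
    (s : ℝ) (hs : 0 < s)
    (p : ℝ) (hp : 1 ≤ p)
    (ψ τ : ℝ) (hψ : 0 < ψ) (hψ1 : ψ < 1) (hτ : 0 < τ)
    (hNSP : ∀ (v : Fin N → ℂ) (S : Finset (Fin N)), (∑ j ∈ S, (w j) ^ 2) ≤ s →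
      l2NormC (restrictC S v) ≤
        (ψ / Real.sqrt s) * w1NormC w (restrictC Sᶜ v) + τ * lpNormC p (Φ v)) :
    ∀ (v a : Fin N → ℂ),
      (∑ j ∈ Finset.univ.filter (fun j => a j ≠ 0), (w j) ^ 2) ≤ s →
      l2NormC v ≤ (ψ / Real.sqrt s + 1) * w1NormC w (v - a) + τ * lpNormC p (Φ v) :=
  weighted_nsp_implies_general_nsp_general Φ w hw s p ψ τ hψ hNSP
end

section
/- Let Φ : ℝ^N → ℝ^m be a linear map, let 1 ≤ p < ∞, let s be a positive integer with s ≤ N, let μ > 0, δ ≥ 0, and suppose ‖Φx‖_{ℓp} ≤ μ(1+δ)‖x‖_{ℓ2} for every x ∈ ℝ^N with at most s nonzero entries. Let ρ > 0 and let x ∈ ℝ^N satisfy ‖x‖_{ℓ2} > ρ‖x‖_{ℓ1}. Let S ⊆ {1,…,N} be a set of indices of the s largest-in-absolute-value entries of x, i.e., |S| = s and |x_j| ≤ |x_i| for every i ∈ S and j ∉ S. Then ‖x − x_S‖_{ℓ2} < ‖x‖_{ℓ2}/(ρ√s) and ‖Φ(x − x_S)‖_{ℓp} < (1+δ)μ‖x‖_{ℓ2}/(ρ√s).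 -/
open Finset

/-- The ℓ1 norm of a vector in ℝ^N. -/
noncomputable def l1Norm {N : ℕ} (v : Fin N → ℝ) : ℝ :=
  ∑ j, |v j|

/-- The ℓ2 norm of a vector in ℝ^N. -/
noncomputable def l2Norm {N : ℕ} (v : Fin N → ℝ) : ℝ :=
  Real.sqrt (∑ j, (v j) ^ 2)

/-- The restriction of a vector to a set of coordinates (zero outside the set). -/
def restrictVec {N : ℕ} (S : Finset (Fin N)) (v : Fin N → ℝ) : Fin N → ℝ :=
  fun j => if j ∈ S then v j else 0

/-!
Let `f` be subadditive with `f z ≤ C ‖z‖₂` for `s`-sparse `z`. Split the complement of `S` into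
consecutive blocks `T₁, T₂, …` of the `s` largest remaining entries of `x`. Each entry of
`Tₖ` is at most the average of the previous block, so `‖x_{Tₖ}‖₂ ≤ √s · max |x_{Tₖ}| ≤
‖x_{Tₖ₋₁}‖₁ / √s` (with `T₀ = S`), and summing gives `f (x - x_S) ≤ C ‖x‖₁ / √s < C ‖x‖₂ / (ρ √s)`.
Taking `f = ‖Φ ·‖_p` with `C = μ (1 + δ)` gives the second bound, and `f = ‖·‖₂` with `C = 1` the
first.
-/

lemma lpNorm_add_le {m : ℕ} {p : ℝ} (hp : 1 ≤ p) (u v : Fin m → ℝ) :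
    lpNorm p (u + v) ≤ lpNorm p u + lpNorm p v :=
  Real.Lp_add_le univ u v hp

lemma l2Norm_eq_lpNorm_two {N : ℕ} (v : Fin N → ℝ) : l2Norm v = lpNorm 2 v := by
  simp only [l2Norm, lpNorm, Real.sqrt_eq_rpow, sq_abs, Real.rpow_two]

lemma l2Norm_add_le {N : ℕ} (u v : Fin N → ℝ) : l2Norm (u + v) ≤ l2Norm u + l2Norm v := by
  simpa only [l2Norm_eq_lpNorm_two] using lpNorm_add_le one_le_two u v

lemma Finset.exists_subset_card_eq_forall_sdiff_le {α β : Type*} [DecidableEq α] [LinearOrder β]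
    (f : α → β) (A : Finset α) {k : ℕ} (hk : k ≤ A.card) :
    ∃ B ⊆ A, B.card = k ∧ ∀ i ∈ B, ∀ j ∈ A \ B, f j ≤ f i := by
  induction k with
  | zero => exact ⟨∅, empty_subset A, rfl, by simp⟩
  | succ k ih =>
    obtain ⟨B, hBA, hBcard, hBmax⟩ := ih (Nat.le_of_succ_le hk)
    have hne : (A \ B).Nonempty := by
      rw [← card_pos, card_sdiff_of_subset hBA]
      omega
    obtain ⟨i₀, hi₀, hi₀max⟩ := exists_max_image (A \ B) f hne
    rw [mem_sdiff] at hi₀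
    refine ⟨insert i₀ B, insert_subset hi₀.1 hBA,
      by rw [card_insert_of_notMem hi₀.2, hBcard], ?_⟩
    intro i hi j hj
    simp only [mem_sdiff, mem_insert, not_or] at hj
    rcases mem_insert.mp hi with rfl | hiB
    · exact hi₀max j (mem_sdiff.mpr ⟨hj.1, hj.2.2⟩)
    · exact hBmax i hiB j (mem_sdiff.mpr ⟨hj.1, hj.2.2⟩)

lemma Finset.le_sum_div_card_of_forall_le {α K : Type*} [Field K] [LinearOrder K]
    [IsStrictOrderedRing K] {B : Finset α} (hB : B.Nonempty) {f : α → K} {c : K}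
    (hc : ∀ i ∈ B, c ≤ f i) : c ≤ (∑ i ∈ B, f i) / B.card :=
  (le_expect hB hc).trans_eq (expect_eq_sum_div_card B f)

section Restriction

variable {N : ℕ}

lemma restrictVec_sdiff_add {A B : Finset (Fin N)} (hBA : B ⊆ A) (x : Fin N → ℝ) :
    restrictVec A x = restrictVec B x + restrictVec (A \ B) x := by
  funext j
  by_cases hB : j ∈ B
  · simp [restrictVec, hB, hBA hB]
  · by_cases hA : j ∈ A <;> simp [restrictVec, hA, hB]

lemma sub_restrictVec (S : Finset (Fin N)) (x : Fin N → ℝ) :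
    x - restrictVec S x = restrictVec Sᶜ x := by
  funext j
  by_cases h : j ∈ S <;> simp [restrictVec, h]

lemma ncard_support_restrictVec_le (A : Finset (Fin N)) (x : Fin N → ℝ) :
    {j | restrictVec A x j ≠ 0}.ncard ≤ A.card := by
  have hsub : {j | restrictVec A x j ≠ 0} ⊆ ↑A := fun j hj => by
    by_contra hjA
    exact hj (if_neg hjA)
  exact (Set.ncard_le_ncard hsub A.finite_toSet).trans (Set.ncard_coe_finset A).le

lemma l2Norm_restrictVec_le {A : Finset (Fin N)} {x : Fin N → ℝ} {t : ℝ} (ht : 0 ≤ t)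
    (hAt : ∀ j ∈ A, |x j| ≤ t) : l2Norm (restrictVec A x) ≤ √A.card * t := by
  have hsq : ∑ j, restrictVec A x j ^ 2 ≤ A.card * t ^ 2 := calc
    ∑ j, restrictVec A x j ^ 2 = ∑ j ∈ A, x j ^ 2 := by
      simp [restrictVec, ite_pow, sum_ite_mem]
    _ ≤ ∑ _j ∈ A, t ^ 2 := 
        sum_le_sum fun j hj => sq_le_sq.mpr ((hAt j hj).trans (le_abs_self t))
    _ = A.card * t ^ 2 := by rw [sum_const, nsmul_eq_mul]
  calc l2Norm (restrictVec A x) ≤ √(A.card * t ^ 2) := Real.sqrt_le_sqrt hsq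
    _ = √A.card * t := by rw [Real.sqrt_mul (Nat.cast_nonneg _), Real.sqrt_sq ht]

end Restriction

lemma Real.sqrt_mul_div_self (x a : ℝ) : √x * (a / x) = a / √x := by
  rw [mul_div_left_comm, Real.sqrt_div_self', mul_one_div]

section BlockDecomposition

variable {N s : ℕ} {f : (Fin N → ℝ) → ℝ} {C : ℝ} {x : Fin N → ℝ}

lemma apply_restrictVec_le_of_card_le (hC : 0 ≤ C)
    (hf_sparse : ∀ z : Fin N → ℝ, {j | z j ≠ 0}.ncard ≤ s → f z ≤ C * l2Norm z)
    {A : Finset (Fin N)} (hA : A.card ≤ s) {t : ℝ} (ht : 0 ≤ t)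
    (hAt : ∀ j ∈ A, |x j| ≤ t) : f (restrictVec A x) ≤ C * (√s * t) := by
  refine (hf_sparse _ ((ncard_support_restrictVec_le A x).trans hA)).trans ?_
  gcongr
  refine (l2Norm_restrictVec_le ht hAt).trans ?_
  gcongr

lemma apply_restrictVec_le_of_forall_abs_le (hs : 0 < s) (hC : 0 ≤ C)
    (hf_add : ∀ u v, f (u + v) ≤ f u + f v)
    (hf_sparse : ∀ z : Fin N → ℝ, {j | z j ≠ 0}.ncard ≤ s → f z ≤ C * l2Norm z)
    (A : Finset (Fin N)) {t : ℝ} (ht : 0 ≤ t) (hAt : ∀ j ∈ A, |x j| ≤ t) :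
    f (restrictVec A x) ≤ C * (√s * t + (∑ j ∈ A, |x j|) / √s) := by
  induction A using Finset.strongInduction generalizing t with
  | H A ih =>
    by_cases hA : A.card ≤ s
    · calc f (restrictVec A x) ≤ C * (√s * t) :=
            apply_restrictVec_le_of_card_le hC hf_sparse hA ht hAt
        _ ≤ C * (√s * t + (∑ j ∈ A, |x j|) / √s) := by
            gcongr
            exact le_add_of_nonneg_right (by positivity)
    obtain ⟨B, hBA, hBcard, hBmax⟩ :=
      Finset.exists_subset_card_eq_forall_sdiff_le (fun j => |x j|) A (not_le.mp hA).le
    have hBne : B.Nonempty := card_pos.mp (hBcard ▸ hs)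
    set t' := (∑ i ∈ B, |x i|) / s
    have hrest : ∀ j ∈ A \ B, |x j| ≤ t' := fun j hj => by
      simpa only [hBcard] using Finset.le_sum_div_card_of_forall_le hBne fun i hi => hBmax i hi j hj
    calc f (restrictVec A x) ≤ f (restrictVec B x) + f (restrictVec (A \ B) x) := by
          rw [restrictVec_sdiff_add hBA]; exact hf_add _ _
      _ ≤ C * (√s * t) + C * (√s * t' + (∑ j ∈ A \ B, |x j|) / √s) := by
          gcongr
          · exact apply_restrictVec_le_of_card_le hC hf_sparse hBcard.le ht
              fun j hj => hAt j (hBA hj)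
          · exact ih _ (sdiff_ssubset hBA hBne) (by positivity) hrest
      _ = C * (√s * t + (∑ j ∈ A, |x j|) / √s) := by
          rw [Real.sqrt_mul_div_self, ← sum_sdiff hBA]
          ring

lemma apply_sub_restrictVec_le (hs : 0 < s) (hC : 0 ≤ C)
    (hf_add : ∀ u v, f (u + v) ≤ f u + f v)
    (hf_sparse : ∀ z : Fin N → ℝ, {j | z j ≠ 0}.ncard ≤ s → f z ≤ C * l2Norm z)
    {S : Finset (Fin N)} (hScard : S.card = s) (hSmax : ∀ i ∈ S, ∀ j ∉ S, |x j| ≤ |x i|) :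
    f (x - restrictVec S x) ≤ C * l1Norm x / √s := by
  have hSne : S.Nonempty := card_pos.mp (hScard ▸ hs)
  have htail : ∀ j ∈ Sᶜ, |x j| ≤ (∑ i ∈ S, |x i|) / s := fun j hj => by
    simpa only [hScard] using
      Finset.le_sum_div_card_of_forall_le hSne fun i hi => hSmax i hi j (mem_compl.mp hj)
  calc f (x - restrictVec S x)
      ≤ C * (√s * ((∑ i ∈ S, |x i|) / s) + (∑ j ∈ Sᶜ, |x j|) / √s) := by
        rw [sub_restrictVec]
        exact apply_restrictVec_le_of_forall_abs_le hs hC hf_add hf_sparse _ (by positivity) htail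
    _ = C * l1Norm x / √s := by
        rw [Real.sqrt_mul_div_self, l1Norm, ← sum_add_sum_compl S]
        ring

end BlockDecomposition

theorem rip_tail_bounds_general
    {N m : ℕ} (Φ : (Fin N → ℝ) →ₗ[ℝ] (Fin m → ℝ))
    (p : ℝ) (hp : 1 ≤ p)
    (s : ℕ) (hs : 0 < s)
    (μ δ : ℝ) (hμ : 0 < μ) (hδ : 0 ≤ δ)
    (hRIPupper : ∀ z : Fin N → ℝ, {j | z j ≠ 0}.ncard ≤ s →
      lpNorm p (Φ z) ≤ μ * (1 + δ) * l2Norm z)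
    (ρ : ℝ) (hρ : 0 < ρ)
    (x : Fin N → ℝ) (hx : l2Norm x > ρ * l1Norm x)
    (S : Finset (Fin N)) (hScard : S.card = s)
    (hSmax : ∀ i ∈ S, ∀ j ∉ S, |x j| ≤ |x i|) :
    l2Norm (x - restrictVec S x) < l2Norm x / (ρ * Real.sqrt s) ∧
    lpNorm p (Φ (x - restrictVec S x)) < (1 + δ) * μ * l2Norm x / (ρ * Real.sqrt s) := by
  have hl1 : l1Norm x / √s < l2Norm x / (ρ * √s) := by
    rw [← div_div]
    gcongr
    rwa [lt_div_iff₀ hρ, mul_comm]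
  have hC : 0 < μ * (1 + δ) := by positivity
  constructor
  · calc l2Norm (x - restrictVec S x) ≤ 1 * l1Norm x / √s :=
          apply_sub_restrictVec_le hs zero_le_one l2Norm_add_le (fun z _ => (one_mul _).ge)
            hScard hSmax
      _ < l2Norm x / (ρ * √s) := by rwa [one_mul]
  · calc lpNorm p (Φ (x - restrictVec S x)) ≤ μ * (1 + δ) * l1Norm x / √s :=
          apply_sub_restrictVec_le (f := fun z => lpNorm p (Φ z)) hs hC.le
            (fun u v => by simpa only [map_add] using lpNorm_add_le hp _ _) hRIPupper hScard hSmax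
      _ < (1 + δ) * μ * l2Norm x / (ρ * √s) := by
        rw [mul_div_assoc, mul_comm (1 + δ), mul_div_assoc]
        exact mul_lt_mul_of_pos_left hl1 hC

/-- Lemma 1: if Φ satisfies the upper inequality of the (μ, s, δ)-RIP_{p,2} and
‖x‖₂ > ρ‖x‖₁, then the tail x − x_S is small in ℓ2 and in the image under Φ. -/
theorem rip_tail_bounds
    {N m : ℕ} (Φ : (Fin N → ℝ) →ₗ[ℝ] (Fin m → ℝ))
    (p : ℝ) (hp : 1 ≤ p)
    (s : ℕ) (hs : 0 < s) (hsN : s ≤ N)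
    (μ δ : ℝ) (hμ : 0 < μ) (hδ : 0 ≤ δ)
    (hRIPupper : ∀ z : Fin N → ℝ, {j | z j ≠ 0}.ncard ≤ s →
      lpNorm p (Φ z) ≤ μ * (1 + δ) * l2Norm z)
    (ρ : ℝ) (hρ : 0 < ρ)
    (x : Fin N → ℝ) (hx : l2Norm x > ρ * l1Norm x)
    (S : Finset (Fin N)) (hScard : S.card = s)
    (hSmax : ∀ i ∈ S, ∀ j ∉ S, |x j| ≤ |x i|) :
    l2Norm (x - restrictVec S x) < l2Norm x / (ρ * Real.sqrt s) ∧
    lpNorm p (Φ (x - restrictVec S x)) < (1 + δ) * μ * l2Norm x / (ρ * Real.sqrt s) :=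
  rip_tail_bounds_general Φ p hp s hs μ δ hμ hδ hRIPupper ρ hρ x hx S hScard hSmax
end
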